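/- Fix a real δ > 0 and let V = {a : ℕ → K | for every real ρ with 0 < ρ < δ, ‖a n‖ · ρ^n → 0 as n → ∞}, the coefficient model of the ring of rigid-analytic functions on the open disk of radius δ (without boundary). Then the formal derivative D maps V into V and D : V → V is surjective. (This is the r = 0, n = 1 case of the paper's Lemma 2.1(b): H¹_dR of the open rigid disk vanishes.) -/

import Mathlib

/-!
The derivative multiplies the `n`-th coefficient by `n + 1` and the antiderivative divides it
by `n + 1`. Both change `‖aₙ‖` by at most a polynomial factor in `n`, and such a factor is
absorbed by passing from a radius `ρ < δ` to a slightly larger one. That `‖(n : K)‖⁻¹` grows at most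
polynomially follows from Ostrowski's theorem: on `ℚ` the norm of `K` is trivial, or a positive
power of the real or of a `p`-adic absolute value, and `|n|_p ≥ 1 / n`.
-/

open Filter Topology

/-- The coefficient model of the ring of rigid-analytic functions on the open disk of radius `δ`
(without boundary): sequences `a : ℕ → K` such that `‖a n‖ * ρ ^ n → 0` for every radius
`0 < ρ < δ`.  It is a `K`-submodule of `ℕ → K`. -/
def OpenDisk (K : Type*) [NormedField K] (δ : ℝ) : Submodule K (ℕ → K) where
  carrier := {a | ∀ ρ : ℝ, 0 < ρ → ρ < δ →
    Tendsto (fun n : ℕ => ‖a n‖ * ρ ^ n) atTop (𝓝 0)}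
  zero_mem' := by
    intro ρ h₁ h₂
    simp
  add_mem' := by
    intro a b ha hb ρ h₁ h₂
    refine squeeze_zero (fun n => mul_nonneg (norm_nonneg _) (pow_nonneg h₁.le n))
      (fun n => ?_) (by simpa using (ha ρ h₁ h₂).add (hb ρ h₁ h₂))
    have h3 : ‖(a + b) n‖ * ρ ^ n ≤ (‖a n‖ + ‖b n‖) * ρ ^ n :=
      mul_le_mul_of_nonneg_right (norm_add_le _ _) (pow_nonneg h₁.le n)
    simpa [add_mul] using h3
  smul_mem' := by
    intro c a ha ρ h₁ h₂
    simpa [norm_mul, mul_assoc] using (ha ρ h₁ h₂).const_mul ‖c‖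

/-- The formal derivative operator `f ↦ df/dT` on coefficient sequences:
`(D a) n = (n + 1) * a (n + 1)`. -/
def DerN (K : Type*) [NormedField K] : (ℕ → K) →ₗ[K] (ℕ → K) where
  toFun a := fun n => ((n + 1 : ℕ) : K) * a (n + 1)
  map_add' a b := by funext n; simp [mul_add]
  map_smul' c a := by
    funext n
    simp only [Pi.smul_apply, smul_eq_mul, RingHom.id_apply]
    ring

namespace Rat.AbsoluteValue

lemma inv_padic_natCast_le (p : ℕ) [Fact p.Prime] {n : ℕ} (hn : n ≠ 0) :
    (padic p n)⁻¹ ≤ n := by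
  have hv : ((p ^ padicValNat p n : ℕ) : ℝ) ≤ n :=
    mod_cast Nat.le_of_dvd (Nat.pos_of_ne_zero hn) pow_padicValNat_dvd
  simpa [padicNorm.eq_zpow_of_nonzero (Nat.cast_ne_zero.mpr hn : (n : ℚ) ≠ 0), padicValRat.of_nat]
    using hv

lemma exists_inv_apply_natCast_le_pow_of_isEquiv {f g : AbsoluteValue ℚ ℝ} (hfg : g.IsEquiv f)
    (hg : ∀ n : ℕ, n ≠ 0 → (g n)⁻¹ ≤ n) :
    ∃ M : ℕ, ∀ n : ℕ, n ≠ 0 → (f n)⁻¹ ≤ (n : ℝ) ^ M := by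
  obtain ⟨c, hc, hgf⟩ := exists_nat_rpow_iff_isEquiv.mpr hfg
  refine ⟨⌈c⌉₊, fun n hn => ?_⟩
  have hn1 : (1 : ℝ) ≤ n := mod_cast Nat.one_le_iff_ne_zero.mpr hn
  have hgn : 0 < g n := g.pos (mod_cast hn)
  calc (f n)⁻¹ = ((g n)⁻¹) ^ c := by rw [← hgf, Real.inv_rpow hgn.le]
    _ ≤ (n : ℝ) ^ c := by gcongr; exact hg n hn
    _ ≤ (n : ℝ) ^ (⌈c⌉₊ : ℝ) := Real.rpow_le_rpow_of_exponent_le hn1 (Nat.le_ceil c)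
    _ = (n : ℝ) ^ ⌈c⌉₊ := Real.rpow_natCast _ _

theorem exists_inv_apply_natCast_le_pow (f : AbsoluteValue ℚ ℝ) :
    ∃ M : ℕ, ∀ n : ℕ, n ≠ 0 → (f n)⁻¹ ≤ (n : ℝ) ^ M := by
  by_cases hf : f.IsNontrivial
  · rcases equiv_real_or_padic f hf with hreal | ⟨p, ⟨_, hpadic⟩, -⟩
    · refine exists_inv_apply_natCast_le_pow_of_isEquiv (Setoid.symm hreal) fun n hn => ?_
      have hn1 : (1 : ℝ) ≤ n := mod_cast Nat.one_le_iff_ne_zero.mpr hn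
      simpa using (inv_le_one_of_one_le₀ hn1).trans hn1
    · exact exists_inv_apply_natCast_le_pow_of_isEquiv (Setoid.symm hpadic)
        fun n hn => inv_padic_natCast_le p hn
  · refine ⟨0, fun n hn => ?_⟩
    rw [(AbsoluteValue.not_isNontrivial_iff f).mp hf n (mod_cast hn)]
    simp

end Rat.AbsoluteValue

theorem exists_inv_norm_natCast_le_pow (K : Type*) [NormedField K] [CharZero K] :
    ∃ M : ℕ, ∀ n : ℕ, n ≠ 0 → ‖(n : K)‖⁻¹ ≤ (n : ℝ) ^ M := by
  obtain ⟨M, hM⟩ := Rat.AbsoluteValue.exists_inv_apply_natCast_le_pow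
    ((IsAbsoluteValue.toAbsoluteValue (norm : K → ℝ)).comp (Rat.castHom K).injective)
  refine ⟨M, fun n hn => ?_⟩
  have h : ‖((n : ℚ) : K)‖⁻¹ ≤ (n : ℝ) ^ M := hM n hn
  rwa [Rat.cast_natCast] at h

namespace OpenDisk

variable {K : Type*} [NormedField K] {δ : ℝ}

theorem shift_mem_iff {a : ℕ → K} :
    (fun n => a (n + 1)) ∈ OpenDisk K δ ↔ a ∈ OpenDisk K δ := by
  refine forall₃_congr fun ρ hρ _ => ?_
  calc Tendsto (fun n => ‖a (n + 1)‖ * ρ ^ n) atTop (𝓝 0)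
      ↔ Tendsto (fun n => ρ • (‖a (n + 1)‖ * ρ ^ n)) atTop (𝓝 (ρ • 0)) :=
        (tendsto_const_smul_iff₀ hρ.ne').symm
    _ ↔ Tendsto (fun n => ‖a (n + 1)‖ * ρ ^ (n + 1)) atTop (𝓝 0) := by
        simp only [smul_eq_mul, mul_zero, pow_succ, mul_left_comm ρ, mul_comm _ ρ]
    _ ↔ Tendsto (fun n => ‖a n‖ * ρ ^ n) atTop (𝓝 0) :=
        tendsto_add_atTop_iff_nat (f := fun n => ‖a n‖ * ρ ^ n) 1

theorem mem_of_norm_le_pow_mul {a b : ℕ → K} (M : ℕ) (hb : b ∈ OpenDisk K δ)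
    (hab : ∀ n, ‖a n‖ ≤ ((n : ℝ) + 1) ^ M * ‖b n‖) : a ∈ OpenDisk K δ := by
  intro ρ hρ hρδ
  obtain ⟨ρ', hρρ', hρ'δ⟩ := exists_between hρδ
  have hρ' : 0 < ρ' := hρ.trans hρρ'
  have hr : |ρ / ρ'| < 1 := by
    rw [abs_of_pos (div_pos hρ hρ'), div_lt_one hρ']
    exact hρρ'
  have hlim := (((tendsto_pow_const_mul_const_pow_of_abs_lt_one M hr).comp
    (tendsto_add_atTop_nat 1)).const_mul (ρ' / ρ)).mul (hb ρ' hρ' hρ'δ)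
  rw [mul_zero] at hlim
  refine squeeze_zero (fun n => by positivity) (fun n => ?_) hlim
  calc ‖a n‖ * ρ ^ n ≤ ((n : ℝ) + 1) ^ M * ‖b n‖ * ρ ^ n := by gcongr; exact hab n
    _ = ρ' / ρ * (((n + 1 : ℕ) : ℝ) ^ M * (ρ / ρ') ^ (n + 1)) * (‖b n‖ * ρ' ^ n) := by
      rw [div_pow]; push_cast; field_simp; ring

end OpenDisk

theorem derN_mem_openDisk {K : Type*} [NormedField K] {δ : ℝ} {a : ℕ → K}
    (ha : a ∈ OpenDisk K δ) : DerN K a ∈ OpenDisk K δ := by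
  refine OpenDisk.mem_of_norm_le_pow_mul 1 (OpenDisk.shift_mem_iff.mpr ha) fun n => ?_
  simp only [DerN, LinearMap.coe_mk, AddHom.coe_mk, norm_mul, pow_one]
  gcongr
  simpa using Nat.norm_cast_le (α := K) (n + 1)

def antiderivN (K : Type*) [Field K] (b : ℕ → K) : ℕ → K
  | 0 => 0
  | n + 1 => ((n + 1 : ℕ) : K)⁻¹ * b n

theorem derN_antiderivN {K : Type*} [NormedField K] [CharZero K] (b : ℕ → K) :
    DerN K (antiderivN K b) = b := by
  funext n
  simp [DerN, antiderivN, mul_inv_cancel_left₀ (Nat.cast_add_one_ne_zero n : ((n : K) + 1) ≠ 0)]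

theorem antiderivN_mem_openDisk {K : Type*} [NormedField K] [CharZero K] {δ : ℝ} {b : ℕ → K}
    (hb : b ∈ OpenDisk K δ) : antiderivN K b ∈ OpenDisk K δ := by
  obtain ⟨M, hM⟩ := exists_inv_norm_natCast_le_pow K
  refine OpenDisk.shift_mem_iff.mp (OpenDisk.mem_of_norm_le_pow_mul M hb fun n => ?_)
  simp only [antiderivN, norm_mul, norm_inv]
  gcongr
  exact_mod_cast hM (n + 1) n.succ_ne_zero

theorem openDisk_deRham_general
    (K : Type*) [NormedField K] [CharZero K]
    (δ : ℝ) :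
    (∀ a ∈ OpenDisk K δ, DerN K a ∈ OpenDisk K δ) ∧
      (∀ b ∈ OpenDisk K δ, ∃ a ∈ OpenDisk K δ, DerN K a = b) :=
  ⟨fun _ => derN_mem_openDisk,
    fun b hb => ⟨antiderivN K b, antiderivN_mem_openDisk hb, derN_antiderivN b⟩⟩

/-- **`H¹_dR` of the open rigid disk vanishes** (the `r = 0`, `n = 1` case of Lemma 2.1(b) of the
paper): the formal derivative maps the ring of rigid-analytic functions on the open disk of
radius `δ` into itself and is surjective on it. -/
theorem openDisk_deRham
    (K : Type*) [NormedField K] [IsUltrametricDist K] [CharZero K]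
    (δ : ℝ) (hδ : 0 < δ) :
    (∀ a ∈ OpenDisk K δ, DerN K a ∈ OpenDisk K δ) ∧
      (∀ b ∈ OpenDisk K δ, ∃ a ∈ OpenDisk K δ, DerN K a = b) :=
  openDisk_deRham_general K δ
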